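/- Let a, b be real numbers with 3/2 < a ≤ b < 2. Then there exist constants 0 < c ≤ C such that for every s ∈ [a, b] and every integer t ∈ ℤ, c·(1 + |t|^(2s−3)) ≤ Γ(s + t)/Γ(3 − s + t) ≤ C·(1 + |t|^(2s−3)). -/

import Mathlib

/-!
With `l = 2s - 3 ∈ (0, 1)`, the quotient `Γ(s + t) / Γ(3 - s + t)` is `Γ(x + l) / Γ(x)` for
`x = 3 - s + t` when `t ≥ 0`, and, by the reflection formula, for `x = 1 - s - t` when `t < 0`.
In both cases `x ≍ 1 + |t|`, and log-convexity of `Γ` (Gautschi's inequality) gives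
`x ^ l · x / (x + 1) ≤ Γ(x + l) / Γ(x) ≤ x ^ l`, while `x ^ l ≍ 1 + |t| ^ l`.
-/

open Real

namespace Real

section GammaRatio

variable {x l : ℝ}

theorem Gamma_add_le_Gamma_mul_rpow (hx : 0 < x) (hl₀ : 0 < l) (hl₁ : l < 1) :
    Gamma (x + l) ≤ Gamma x * x ^ l := by
  have hG := Gamma_pos_of_pos hx
  calc Gamma (x + l) = Gamma ((1 - l) * x + l * (x + 1)) := by ring_nf
    _ ≤ Gamma x ^ (1 - l) * Gamma (x + 1) ^ l :=
      Gamma_mul_add_mul_le_rpow_Gamma_mul_rpow_Gamma hx (by linarith) (by linarith) hl₀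
        (by ring)
    _ = Gamma x ^ (1 - l + l) * x ^ l := by
      rw [Gamma_add_one hx.ne', mul_rpow hx.le hG.le, rpow_add hG]; ring
    _ = Gamma x * x ^ l := by rw [sub_add_cancel, rpow_one]

theorem Gamma_add_div_Gamma_le_rpow (hx : 0 < x) (hl₀ : 0 < l) (hl₁ : l < 1) :
    Gamma (x + l) / Gamma x ≤ x ^ l := by
  rw [div_le_iff₀ (Gamma_pos_of_pos hx), mul_comm]
  exact Gamma_add_le_Gamma_mul_rpow hx hl₀ hl₁

theorem rpow_mul_div_add_one_le_Gamma_add_div_Gamma (hx : 0 < x) (hl₀ : 0 < l) (hl₁ : l < 1) :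
    x ^ l * (x / (x + 1)) ≤ Gamma (x + l) / Gamma x := by
  have hstep : x * Gamma x ≤ Gamma (x + l) * (x + 1) ^ (1 - l) := calc
    x * Gamma x = Gamma (x + l + (1 - l)) := by rw [add_add_sub_cancel, Gamma_add_one hx.ne']
    _ ≤ Gamma (x + l) * (x + l) ^ (1 - l) :=
      Gamma_add_le_Gamma_mul_rpow (by linarith) (by linarith) (by linarith)
    _ ≤ Gamma (x + l) * (x + 1) ^ (1 - l) := by gcongr
  have hpow : x ^ l * (x + 1) ^ (1 - l) ≤ x + 1 := calc
    x ^ l * (x + 1) ^ (1 - l) ≤ (x + 1) ^ l * (x + 1) ^ (1 - l) := by gcongr; linarith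
    _ = x + 1 := by rw [← rpow_add (by linarith), add_sub_cancel, rpow_one]
  rw [le_div_iff₀ (Gamma_pos_of_pos hx), mul_div_assoc', div_mul_eq_mul_div,
    div_le_iff₀ (by linarith)]
  calc x ^ l * x * Gamma x ≤ x ^ l * (Gamma (x + l) * (x + 1) ^ (1 - l)) := by
        rw [mul_assoc]; gcongr
    _ = Gamma (x + l) * (x ^ l * (x + 1) ^ (1 - l)) := by ring
    _ ≤ Gamma (x + l) * (x + 1) := by gcongr

end GammaRatio

theorem Gamma_div_Gamma_eq_Gamma_one_sub_div_Gamma_one_sub {z w : ℝ} (k : ℤ)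
    (hzw : z + w = 1 + 2 * k) (hz : ∀ n : ℤ, z ≠ n) :
    Gamma z / Gamma w = Gamma (1 - w) / Gamma (1 - z) := by
  have hsin : sin (π * z) ≠ 0 := by
    rw [Ne, sin_eq_zero_iff]
    rintro ⟨n, hn⟩
    exact hz n (by field_simp at hn; linarith)
  have hprod : Gamma (1 - w) * Gamma w = Gamma z * Gamma (1 - z) := by
    have hw : π * (1 - w) = π * z + ((-k : ℤ) : ℝ) * (2 * π) := by
      push_cast; linear_combination (-π) * hzw
    have h := Gamma_mul_Gamma_one_sub (1 - w)
    rw [sub_sub_cancel, hw, sin_add_int_mul_two_pi] at h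
    rw [h, Gamma_mul_Gamma_one_sub]
  have hne : Gamma z * Gamma (1 - z) ≠ 0 := by
    rw [Gamma_mul_Gamma_one_sub]; exact div_ne_zero pi_ne_zero hsin
  rw [div_eq_div_iff (right_ne_zero_of_mul (hprod ▸ hne)) (right_ne_zero_of_mul hne), hprod]

section RpowComparison

variable {x m l : ℝ}

theorem rpow_le_mul_one_add_rpow {K : ℝ} (hx : 0 ≤ x) (hm : 0 ≤ m) (hK : 1 ≤ K)
    (hxm : x ≤ m + K) (hl₀ : 0 ≤ l) (hl₁ : l ≤ 1) :
    x ^ l ≤ K * (1 + m ^ l) := calc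
  x ^ l ≤ (m + K) ^ l := by gcongr
  _ ≤ m ^ l + K ^ l := rpow_add_le_add_rpow hm (by linarith) hl₀ hl₁
  _ ≤ m ^ l + K := by gcongr; exact rpow_le_self_of_one_le hK hl₁
  _ ≤ K * (1 + m ^ l) := by nlinarith [rpow_nonneg hm l]

theorem mul_one_add_rpow_le_rpow {κ : ℝ} (hκ₀ : 0 < κ) (hκ₁ : κ ≤ 1) (hm : 0 ≤ m)
    (hxm : κ * (1 + m) ≤ x) (hl₀ : 0 ≤ l) (hl₁ : l ≤ 1) :
    κ / 2 * (1 + m ^ l) ≤ x ^ l := by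
  have h₁ : 1 ≤ (1 + m) ^ l := one_le_rpow (by linarith) hl₀
  have h₂ : m ^ l ≤ (1 + m) ^ l := by gcongr; linarith
  calc κ / 2 * (1 + m ^ l) ≤ κ * (1 + m) ^ l := by nlinarith
    _ ≤ κ ^ l * (1 + m) ^ l := by gcongr; exact self_le_rpow_of_le_one hκ₀.le hκ₁ hl₁
    _ = (κ * (1 + m)) ^ l := (mul_rpow hκ₀.le (by linarith)).symm
    _ ≤ x ^ l := by gcongr

end RpowComparison

theorem Gamma_add_div_Gamma_bounds {x m l ε K : ℝ} (hε₀ : 0 < ε) (hε₁ : ε ≤ 1) (hm : 0 ≤ m)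
    (hK : 1 ≤ K) (hxm : ε * (1 + m) ≤ x) (hxm' : x ≤ m + K) (hl₀ : 0 < l) (hl₁ : l < 1) :
    ε ^ 2 / 4 * (1 + m ^ l) ≤ Gamma (x + l) / Gamma x ∧
      Gamma (x + l) / Gamma x ≤ K * (1 + m ^ l) := by
  have hεx : ε ≤ x := by nlinarith
  have hx : 0 < x := by linarith
  refine ⟨?_, (Gamma_add_div_Gamma_le_rpow hx hl₀ hl₁).trans
    (rpow_le_mul_one_add_rpow hx.le hm hK hxm' hl₀.le hl₁.le)⟩
  have hfrac : ε / 2 ≤ x / (x + 1) := by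
    rw [le_div_iff₀ (by linarith)]; nlinarith
  calc ε ^ 2 / 4 * (1 + m ^ l) = ε / 2 * (1 + m ^ l) * (ε / 2) := by ring
    _ ≤ x ^ l * (x / (x + 1)) := by
      gcongr
      exact mul_one_add_rpow_le_rpow hε₀ hε₁ hm hxm hl₀.le hl₁.le
    _ ≤ Gamma (x + l) / Gamma x := rpow_mul_div_add_one_le_Gamma_add_div_Gamma hx hl₀ hl₁

end Real

theorem exists_Gamma_div_Gamma_eq_Gamma_add_div_Gamma {s : ℝ} (hs₁ : 3 / 2 ≤ s) (hs₂ : s < 2) (t : ℤ) :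
    ∃ x, (2 - s) / 2 * (1 + |(t : ℝ)|) ≤ x ∧ x ≤ |(t : ℝ)| + 3 / 2 ∧
      Gamma (s + t) / Gamma (3 - s + t) = Gamma (x + (2 * s - 3)) / Gamma x := by
  rcases le_or_gt 0 t with ht | ht
  · have ht' : (0 : ℝ) ≤ t := by exact_mod_cast ht
    refine ⟨3 - s + t, ?_, ?_, by ring_nf⟩ <;> rw [abs_of_nonneg ht'] <;> nlinarith
  · have ht' : (t : ℝ) ≤ -1 := by exact_mod_cast Int.le_sub_one_of_lt ht
    refine ⟨1 - s - t, ?_, ?_, ?_⟩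
    · rw [abs_of_neg (by linarith)]; nlinarith
    · rw [abs_of_neg (by linarith)]; linarith
    · have hst : ∀ n : ℤ, s + t ≠ n := by
        intro n hn
        have hs : ((n - t : ℤ) : ℝ) = s := by push_cast; linarith
        have h₁ : (1 : ℝ) < ((n - t : ℤ) : ℝ) := by rw [hs]; linarith
        have h₂ : ((n - t : ℤ) : ℝ) < 2 := by rw [hs]; linarith
        have : (1 : ℤ) < n - t ∧ n - t < 2 := ⟨by exact_mod_cast h₁, by exact_mod_cast h₂⟩
        omega
      rw [Gamma_div_Gamma_eq_Gamma_one_sub_div_Gamma_one_sub (t + 1) (by push_cast; ring) hst]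
      ring_nf

theorem gamma_quotient_two_sided_bound_d3
    (a b : ℝ) (ha : 3 / 2 < a) (hab : a ≤ b) (hb : b < 2) :
    ∃ c C : ℝ, 0 < c ∧ c ≤ C ∧
      ∀ s ∈ Set.Icc a b, ∀ t : ℤ,
        c * (1 + |(t : ℝ)| ^ (2 * s - 3)) ≤ Gamma (s + t) / Gamma (3 - s + t) ∧
        Gamma (s + t) / Gamma (3 - s + t) ≤ C * (1 + |(t : ℝ)| ^ (2 * s - 3)) := by
  refine ⟨(2 - b) ^ 2 / 16, 3 / 2, by nlinarith, by nlinarith, ?_⟩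
  rintro s ⟨has, hsb⟩ t
  obtain ⟨x, hxt, hxt', hq⟩ := exists_Gamma_div_Gamma_eq_Gamma_add_div_Gamma (s := s) (by linarith) (by linarith) t
  obtain ⟨hlower, hupper⟩ := Gamma_add_div_Gamma_bounds (l := 2 * s - 3) (K := 3 / 2)
    (by linarith) (by linarith) (abs_nonneg _) (by norm_num) hxt hxt' (by linarith) (by linarith)
  have hc : (2 - b) ^ 2 / 16 ≤ ((2 - s) / 2) ^ 2 / 4 := by nlinarith
  rw [hq]
  exact ⟨le_trans (by gcongr) hlower, hupper⟩
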